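/- arXiv:1906.08024 — 5 statements merged into one kernel-verified Lean document; each statement's English description precedes it below -/
import Mathlib

section
/- Fix α ≥ 1, G > 0, σ² > 0, and B > 0. The function ξ(p, χ) = −B·log₂(1 + G·p/(σ²·χ^α)) is quasiconvex on the convex domain {(p, χ) ∈ ℝ² : p ≥ 0, χ > 0}; in particular, for every r ∈ ℝ the set R = {(p, χ) : p ≥ 0, χ > 0, B·log₂(1 + G·p/(σ²·χ^α)) ≥ r} is convex. -/
/-!
The rate is an increasing function of the received SNR `G p / (σ² χ^α)`, so each superlevel
set `{r ≤ rate}` is `{(p, χ) : χ > 0, K χ^α ≤ p}` for a threshold `K ≥ 0` (negative thresholds are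
absorbed by `p ≥ 0`). Up to swapping coordinates this is the epigraph of the convex function
`χ ↦ K χ^α` on `χ > 0`, convex because `α ≥ 1`.
-/

open Real Set

lemma le_mul_logb_one_add_div_iff {G σ2 B r t p : ℝ} (hG : 0 < G) (hσ : 0 < σ2) (hB : 0 < B)
    (ht : 0 < t) (hp : 0 ≤ p) :
    r ≤ B * logb 2 (1 + G * p / (σ2 * t)) ↔ (2 ^ (r / B) - 1) * σ2 / G * t ≤ p := by
  have hσt : 0 < σ2 * t := mul_pos hσ ht
  rw [← div_le_iff₀' hB, le_logb_iff_rpow_le one_lt_two (by positivity), ← sub_le_iff_le_add',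
    le_div_iff₀ hσt, div_mul_eq_mul_div, div_le_iff₀ hG]
  constructor <;> intro h <;> nlinarith

lemma convex_setOf_mul_rpow_le {K α : ℝ} (hK : 0 ≤ K) (hα : 1 ≤ α) :
    Convex ℝ {x : ℝ × ℝ | 0 < x.2 ∧ K * x.2 ^ α ≤ x.1} :=
  (((convexOn_rpow hα).subset Ioi_subset_Ici_self (convex_Ioi 0)).smul hK).convex_epigraph
    |>.linear_preimage (LinearEquiv.prodComm ℝ ℝ ℝ).toLinearMap

lemma setOf_le_mul_logb_one_add_div_eq {G σ2 B : ℝ} (hG : 0 < G) (hσ : 0 < σ2) (hB : 0 < B)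
    (α r : ℝ) :
    {x : ℝ × ℝ | 0 ≤ x.1 ∧ 0 < x.2 ∧ r ≤ B * logb 2 (1 + G * x.1 / (σ2 * x.2 ^ α))} =
      {x : ℝ × ℝ | 0 < x.2 ∧ max ((2 ^ (r / B) - 1) * σ2 / G) 0 * x.2 ^ α ≤ x.1} := by
  ext ⟨p, χ⟩
  simp only [mem_ofPred_eq]
  constructor
  · rintro ⟨hp, hχ, hr⟩
    rw [max_mul_of_nonneg _ _ (rpow_nonneg hχ.le α), zero_mul]
    exact ⟨hχ, max_le ((le_mul_logb_one_add_div_iff hG hσ hB (rpow_pos_of_pos hχ α) hp).1 hr) hp⟩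
  · rintro ⟨hχ, h⟩
    rw [max_mul_of_nonneg _ _ (rpow_nonneg hχ.le α), zero_mul, max_le_iff] at h
    exact ⟨h.2, hχ, (le_mul_logb_one_add_div_iff hG hσ hB (rpow_pos_of_pos hχ α) h.2).2 h.1⟩

/-- The function `ξ(p, χ) = −B·log₂(1 + G·p/(σ²·χ^α))` is quasiconvex
on `{(p, χ) : p ≥ 0, χ > 0}`; in particular every set
`R = {(p, χ) : p ≥ 0, χ > 0, B·log₂(1 + G·p/(σ²·χ^α)) ≥ r}` is convex. -/
theorem stmt_4 (α G σ2 B : ℝ) (hα : 1 ≤ α) (hG : 0 < G) (hσ : 0 < σ2) (hB : 0 < B) :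
    QuasiconvexOn ℝ {x : ℝ × ℝ | 0 ≤ x.1 ∧ 0 < x.2}
      (fun x => -(B * Real.logb 2 (1 + G * x.1 / (σ2 * x.2 ^ α)))) ∧
    ∀ r : ℝ, Convex ℝ {x : ℝ × ℝ | 0 ≤ x.1 ∧ 0 < x.2 ∧
      r ≤ B * Real.logb 2 (1 + G * x.1 / (σ2 * x.2 ^ α))} := by
  have superlevel_convex : ∀ r : ℝ, Convex ℝ {x : ℝ × ℝ | 0 ≤ x.1 ∧ 0 < x.2 ∧
      r ≤ B * Real.logb 2 (1 + G * x.1 / (σ2 * x.2 ^ α))} := fun r => by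
    rw [setOf_le_mul_logb_one_add_div_eq hG hσ hB]
    exact convex_setOf_mul_rpow_le (le_max_right _ _) hα
  refine ⟨fun c => ?_, superlevel_convex⟩
  convert superlevel_convex (-c) using 1
  ext x
  simp only [mem_ofPred_eq, neg_le, and_assoc]
end

section
/- Let T > 0, σ² > 0, P_max > 0, and let η : [0,T] → (0, ∞) be continuous. Fix ζ ≥ 0 and define the water-filling power profile p*(t) = min{P_max, max{0, ζ − σ²/η(t)}} and the delivered data D = ∫₀ᵀ log(1 + η(t)·p*(t)/σ²) dt. Then for every measurable p : [0,T] → [0, P_max] satisfying ∫₀ᵀ log(1 + η(t)·p(t)/σ²) dt ≥ D, it holds that ∫₀ᵀ p*(t) dt ≤ ∫₀ᵀ p(t) dt. In other words, the water-filling profile minimizes total transmission energy among all power profiles delivering at least D nats of data. -/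
/-!
The water level `ζ` is a Lagrange multiplier for the data constraint. Since `log` lies below
its tangent lines, the KKT conditions show that for every `t` the water-filling power
`p*(t)` maximizes `x ↦ ζ log (1 + η(t) x / σ²) - x` over `[0, P_max]`. Integrating this
pointwise inequality for any admissible `p` gives
`ζ (∫ rate(p) - D) ≤ ∫ p - ∫ p*`, and the left side is nonnegative.
-/

open MeasureTheory Set Real
open scoped Interval

noncomputable def waterFilling (ζ σ2 Pmax e : ℝ) : ℝ := min Pmax (max 0 (ζ - σ2 / e))

lemma Real.log_sub_log_le_div {a b : ℝ} (ha : 0 < a) (hb : 0 < b) :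
    log a - log b ≤ (a - b) / b := by
  rw [← log_div ha.ne' hb.ne', sub_div, div_self hb.ne']
  exact log_le_sub_one_of_pos (div_pos ha hb)

section WaterFilling

variable {ζ σ2 Pmax e : ℝ}

lemma waterFilling_mem_Icc (hP : 0 ≤ Pmax) : waterFilling ζ σ2 Pmax e ∈ Icc 0 Pmax :=
  ⟨le_min hP (le_max_left _ _), min_le_left _ _⟩

lemma ContinuousOn.waterFilling {η : ℝ → ℝ} {s : Set ℝ} (hη : ContinuousOn η s)
    (hη0 : ∀ t ∈ s, η t ≠ 0) : ContinuousOn (fun t => waterFilling ζ σ2 Pmax (η t)) s := by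
  unfold _root_.waterFilling
  fun_prop (disch := assumption)

lemma waterFilling_kkt (he : 0 < e) {q : ℝ} (hq : q ∈ Icc 0 Pmax) :
    ζ * e * (q - waterFilling ζ σ2 Pmax e) ≤
      (σ2 + e * waterFilling ζ σ2 Pmax e) * (q - waterFilling ζ σ2 Pmax e) := by
  unfold waterFilling
  rcases le_total (ζ - σ2 / e) 0 with hlow | hpos
  · rw [max_eq_left hlow, min_eq_right (hq.1.trans hq.2)]
    have : ζ * e ≤ σ2 := by rwa [sub_nonpos, le_div_iff₀ he] at hlow
    nlinarith [hq.1]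
  have hlevel : σ2 + e * (ζ - σ2 / e) = ζ * e := by field_simp; ring
  rcases le_total (ζ - σ2 / e) Pmax with hmid | hhigh
  · rw [max_eq_right hpos, min_eq_right hmid, hlevel]
  · rw [max_eq_right hpos, min_eq_left hhigh]
    have : σ2 + e * Pmax ≤ ζ * e := hlevel ▸ by gcongr
    nlinarith [hq.2]

lemma isMaxOn_waterFilling (hσ : 0 < σ2) (he : 0 < e) (hζ : 0 ≤ ζ) :
    IsMaxOn (fun x => ζ * log (1 + e * x / σ2) - x) (Icc 0 Pmax) (waterFilling ζ σ2 Pmax e) := by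
  intro q hq
  have hs := (waterFilling_mem_Icc (ζ := ζ) (σ2 := σ2) (e := e) (hq.1.trans hq.2)).1
  have hkkt := waterFilling_kkt (ζ := ζ) (σ2 := σ2) he hq
  show ζ * log (1 + e * q / σ2) - q ≤ ζ * log (1 + e * waterFilling ζ σ2 Pmax e / σ2) - _
  generalize waterFilling ζ σ2 Pmax e = s at hs hkkt ⊢
  have hq0 := hq.1
  have hlog := log_sub_log_le_div (a := 1 + e * q / σ2) (b := 1 + e * s / σ2)
    (by positivity) (by positivity)
  have hslope : (1 + e * q / σ2 - (1 + e * s / σ2)) / (1 + e * s / σ2)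
      = e * (q - s) / (σ2 + e * s) := by field_simp; ring
  have hζslope : ζ * (e * (q - s) / (σ2 + e * s)) ≤ q - s := by
    rw [mul_div_assoc', div_le_iff₀ (by positivity), ← mul_assoc, mul_comm (q - s)]
    exact hkkt
  rw [hslope] at hlog
  nlinarith [mul_le_mul_of_nonneg_left hlog hζ]

end WaterFilling

lemma IntervalIntegrable.log_one_add {f : ℝ → ℝ} {a b : ℝ} (hf : IntervalIntegrable f volume a b)
    (hf0 : ∀ t ∈ Ι a b, 0 ≤ f t) : IntervalIntegrable (fun t => Real.log (1 + f t)) volume a b := by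
  refine hf.mono_fun'
    (measurable_log.comp_aemeasurable (hf.def'.aemeasurable.const_add 1)).aestronglyMeasurable ?_
  filter_upwards [ae_restrict_mem measurableSet_uIoc] with t ht
  rw [norm_of_nonneg (log_nonneg (le_add_of_nonneg_right (hf0 t ht)))]
  simpa [add_comm] using log_le_sub_one_of_pos (by linarith [hf0 t ht] : 0 < 1 + f t)

/-- Over a known time-varying channel `η`, the water-filling profile
`p*(t) = min{P_max, max{0, ζ − σ²/η(t)}}` minimizes total transmission energy among
all power profiles delivering at least as much data `D = ∫₀ᵀ log(1 + η p*/σ²)`. -/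
theorem stmt_9 (T σ2 Pmax : ℝ) (hT : 0 < T) (hσ : 0 < σ2) (hP : 0 < Pmax)
    (η : ℝ → ℝ) (hη : ContinuousOn η (Set.Icc 0 T))
    (hηpos : ∀ t ∈ Set.Icc (0 : ℝ) T, 0 < η t)
    (ζ : ℝ) (hζ : 0 ≤ ζ)
    (pstar : ℝ → ℝ) (hpstar : ∀ t, pstar t = min Pmax (max 0 (ζ - σ2 / η t)))
    (D : ℝ) (hD : D = ∫ t in (0:ℝ)..T, Real.log (1 + η t * pstar t / σ2))
    (p : ℝ → ℝ) (hmeas : Measurable p)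
    (hbound : ∀ t, p t ∈ Set.Icc (0 : ℝ) Pmax)
    (hdata : D ≤ ∫ t in (0:ℝ)..T, Real.log (1 + η t * p t / σ2)) :
    (∫ t in (0:ℝ)..T, pstar t) ≤ ∫ t in (0:ℝ)..T, p t := by
  obtain rfl : pstar = fun t => waterFilling ζ σ2 Pmax (η t) := funext hpstar
  subst hD
  set rate : (ℝ → ℝ) → ℝ → ℝ := fun q t => log (1 + η t * q t / σ2)
  have hη0 : ∀ t ∈ Ι 0 T, 0 < η t := fun t ht =>
    hηpos t (Ioc_subset_Icc_self (uIoc_of_le hT.le ▸ ht))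
  rw [← uIcc_of_le hT.le] at hη
  have hp_int : IntervalIntegrable p volume 0 T :=
    intervalIntegrable_const.mono_fun' hmeas.aestronglyMeasurable
      (ae_of_all _ fun t => (norm_of_nonneg (hbound t).1).trans_le (hbound t).2)
  have hs_int : IntervalIntegrable (fun t => waterFilling ζ σ2 Pmax (η t)) volume 0 T :=
    (hη.waterFilling fun t ht => (hηpos t (uIcc_of_le hT.le ▸ ht)).ne').intervalIntegrable
  have hrate_int {q : ℝ → ℝ} (hq : IntervalIntegrable q volume 0 T) (hq0 : ∀ t, 0 ≤ q t) :
      IntervalIntegrable (rate q) volume 0 T :=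
    ((hq.continuousOn_mul hη).div_const σ2).log_one_add fun t ht =>
      div_nonneg (mul_nonneg (hη0 t ht).le (hq0 t)) hσ.le
  have hp_rate := hrate_int hp_int fun t => (hbound t).1
  have hs_rate := hrate_int hs_int fun t => (waterFilling_mem_Icc hP.le).1
  have hlagrangian := intervalIntegral.integral_mono_on hT.le
    ((hp_rate.const_mul ζ).sub hp_int) ((hs_rate.const_mul ζ).sub hs_int)
    fun t ht => isMaxOn_waterFilling hσ (hηpos t ht) hζ (hbound t)
  rw [intervalIntegral.integral_sub (hp_rate.const_mul ζ) hp_int,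
    intervalIntegral.integral_sub (hs_rate.const_mul ζ) hs_int,
    intervalIntegral.integral_const_mul, intervalIntegral.integral_const_mul] at hlagrangian
  nlinarith [mul_le_mul_of_nonneg_left hdata hζ]
end

section
/- Let T > 0, 0 < V̲ < V̄, and Q_init < Q_final with V̲·T ≤ Q_final − Q_init ≤ V̄·T. Set t₁ = ((Q_final − Q_init) − V̄·T)/(V̲ − V̄), and define χ*(t) = Q_init + V̲·t for t ∈ [0, t₁] and χ*(t) = Q_init + V̲·t₁ + V̄·(t − t₁) for t ∈ [t₁, T]. Then for every integrable speed profile v : [0,T] → [V̲, V̄] with ∫₀ᵀ v(τ) dτ = Q_final − Q_init, the corresponding position χ(t) = Q_init + ∫₀ᵗ v(τ) dτ satisfies χ*(t) ≤ χ(t) for all t ∈ [0, T]; moreover χ*(T) = Q_final. -/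
/-!
Before the switching time `t₁` the bang-bang trajectory is `Q_init + V̲ t`, which every feasible
trajectory dominates because its speed is at least `V̲`. After `t₁` it is `Q_final - V̄ (T - t)`
(this is how `t₁` is chosen), which every feasible trajectory dominates because it still has to
cover the remaining distance `Q_final - χ(t)` at speed at most `V̄`.
-/

open MeasureTheory Set

section SpeedBounds

variable {v : ℝ → ℝ} {a b t c : ℝ}

theorem mul_sub_le_intervalIntegral_of_le (hab : a ≤ b) (hv : IntervalIntegrable v volume a b)
    (hc : ∀ x ∈ Icc a b, c ≤ v x) : c * (b - a) ≤ ∫ x in a..b, v x := by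
  simpa [mul_comm] using
    intervalIntegral.integral_mono_on hab intervalIntegrable_const hv hc

theorem intervalIntegral_le_mul_sub_of_le (hab : a ≤ b) (hv : IntervalIntegrable v volume a b)
    (hc : ∀ x ∈ Icc a b, v x ≤ c) : ∫ x in a..b, v x ≤ c * (b - a) := by
  simpa [mul_comm] using
    intervalIntegral.integral_mono_on hab hv intervalIntegrable_const hc

theorem IntervalIntegrable.mono_Icc (hv : IntervalIntegrable v volume a b) {s : ℝ}
    (hs : s ∈ Icc a b) (ht : t ∈ Icc a b) : IntervalIntegrable v volume s t :=
  hv.mono_set (uIcc_subset_uIcc (mem_uIcc_of_le hs.1 hs.2) (mem_uIcc_of_le ht.1 ht.2))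

theorem intervalIntegral_sub_mul_le_of_le (hv : IntervalIntegrable v volume a b)
    (ht : t ∈ Icc a b) (hc : ∀ x ∈ Icc t b, v x ≤ c) :
    (∫ x in a..b, v x) - c * (b - t) ≤ ∫ x in a..t, v x := by
  have ha : a ∈ Icc a b := ⟨le_rfl, ht.1.trans ht.2⟩
  have hb : b ∈ Icc a b := ⟨ht.1.trans ht.2, le_rfl⟩
  have hsplit := intervalIntegral.integral_add_adjacent_intervals
    (hv.mono_Icc ha ht) (hv.mono_Icc ht hb)
  have htail := intervalIntegral_le_mul_sub_of_le ht.2 (hv.mono_Icc ht hb) hc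
  linarith

end SpeedBounds

section SwitchingTime

variable {T Vlo Vhi Qinit Qfinal t₁ : ℝ}

theorem switchingTime_le (hV : Vlo < Vhi) (hfeas : Vlo * T ≤ Qfinal - Qinit)
    (ht₁ : t₁ = ((Qfinal - Qinit) - Vhi * T) / (Vlo - Vhi)) : t₁ ≤ T := by
  rw [ht₁, div_le_iff_of_neg (sub_neg.mpr hV)]
  linarith

theorem bangBang_tail_eq (hV : Vlo ≠ Vhi)
    (ht₁ : t₁ = ((Qfinal - Qinit) - Vhi * T) / (Vlo - Vhi)) (t : ℝ) :
    Qinit + Vlo * t₁ + Vhi * (t - t₁) = Qfinal - Vhi * (T - t) := by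
  have hkey : (Vlo - Vhi) * t₁ = Qfinal - Qinit - Vhi * T := by
    rw [ht₁, mul_div_cancel₀ _ (sub_ne_zero.mpr hV)]
  linarith

end SwitchingTime

theorem stmt_10_general (T Vlo Vhi Qinit Qfinal : ℝ)
    (hV : Vlo < Vhi)
    (hfeas1 : Vlo * T ≤ Qfinal - Qinit)
    (t₁ : ℝ) (ht₁ : t₁ = ((Qfinal - Qinit) - Vhi * T) / (Vlo - Vhi))
    (χstar : ℝ → ℝ)
    (hχstar : ∀ t, χstar t =
      if t ≤ t₁ then Qinit + Vlo * t else Qinit + Vlo * t₁ + Vhi * (t - t₁))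
    (v : ℝ → ℝ) (hint : IntervalIntegrable v volume 0 T)
    (hv : ∀ t ∈ Set.Icc (0 : ℝ) T, v t ∈ Set.Icc Vlo Vhi)
    (htot : (∫ τ in (0:ℝ)..T, v τ) = Qfinal - Qinit) :
    (∀ t ∈ Set.Icc (0 : ℝ) T, χstar t ≤ Qinit + ∫ τ in (0:ℝ)..t, v τ) ∧
      χstar T = Qfinal := by
  have htail := bangBang_tail_eq hV.ne ht₁
  refine ⟨fun t ht => ?_, ?_⟩
  · rw [hχstar]
    split_ifs
    · have hmin := mul_sub_le_intervalIntegral_of_le ht.1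
        (hint.mono_Icc ⟨le_rfl, ht.1.trans ht.2⟩ ht)
        fun x hx => (hv x ⟨hx.1, hx.2.trans ht.2⟩).1
      linarith
    · have hmax := intervalIntegral_sub_mul_le_of_le hint ht
        fun x hx => (hv x ⟨ht.1.trans hx.1, hx.2⟩).2
      linarith [htail t]
  · rw [hχstar]
    split_ifs with hT
    · obtain rfl : T = t₁ := le_antisymm hT (switchingTime_le hV hfeas1 ht₁)
      linarith [htail T]
    · linarith [htail T]

/-- The bang-bang trajectory (minimum speed until `t₁`, then maximum
speed) is pointwise closest to the receiver: every feasible trajectory `χ` satisfies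
`χ*(t) ≤ χ(t)` on `[0, T]`, and `χ*(T) = Q_final`. -/
theorem stmt_10 (T Vlo Vhi Qinit Qfinal : ℝ) (hT : 0 < T) (hVlo : 0 < Vlo)
    (hV : Vlo < Vhi) (hQ : Qinit < Qfinal)
    (hfeas1 : Vlo * T ≤ Qfinal - Qinit) (hfeas2 : Qfinal - Qinit ≤ Vhi * T)
    (t₁ : ℝ) (ht₁ : t₁ = ((Qfinal - Qinit) - Vhi * T) / (Vlo - Vhi))
    (χstar : ℝ → ℝ)
    (hχstar : ∀ t, χstar t =
      if t ≤ t₁ then Qinit + Vlo * t else Qinit + Vlo * t₁ + Vhi * (t - t₁))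
    (v : ℝ → ℝ) (hint : IntervalIntegrable v volume 0 T)
    (hv : ∀ t ∈ Set.Icc (0 : ℝ) T, v t ∈ Set.Icc Vlo Vhi)
    (htot : (∫ τ in (0:ℝ)..T, v τ) = Qfinal - Qinit) :
    (∀ t ∈ Set.Icc (0 : ℝ) T, χstar t ≤ Qinit + ∫ τ in (0:ℝ)..t, v τ) ∧
      χstar T = Qfinal :=
  stmt_10_general T Vlo Vhi Qinit Qfinal hV hfeas1 t₁ ht₁ χstar hχstar v hint hv htot
end

section
/- Let T > 0, 0 < V̲ < V̄, and Q_init < Q_final with V̲·T ≤ Q_final − Q_init ≤ V̄·T; set t₁ = ((Q_final − Q_init) − V̄·T)/(V̲ − V̄) and let χ*(t) be the bang-bang trajectory equal to Q_init + V̲·t on [0, t₁] and to Q_init + V̲·t₁ + V̄·(t − t₁) on [t₁, T]. Then for every continuous non-increasing function f : ℝ → ℝ and every integrable speed profile v : [0,T] → [V̲, V̄] with ∫₀ᵀ v(τ) dτ = Q_final − Q_init and position χ(t) = Q_init + ∫₀ᵗ v(τ) dτ, it holds that ∫₀ᵀ f(χ(t)) dt ≤ ∫₀ᵀ f(χ*(t))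 dt. Thus the bang-bang speed profile (minimum speed then maximum speed) maximizes the total transferred data when the instantaneous rate f is a non-increasing function of the distance to the receiver. -/
/-!
The bang-bang trajectory is the pointwise lowest feasible one: at time `t` every admissible
trajectory has covered at least `V̲ t` (it never moves slower than `V̲`) and at least
`(Q_final - Q_init) - V̄ (T - t)` (it must still reach `Q_final` moving at most at `V̄`), and
`χ*` is exactly the maximum of these two bounds. Since `f` is non-increasing, `f ∘ χ ≤ f ∘ χ*`
pointwise, and integrating gives the claim.
-/

open MeasureTheory Set

namespace intervalIntegral

variable {v : ℝ → ℝ} {a b c : ℝ}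

theorem const_mul_sub_le_integral (hab : a ≤ b) (hv : IntervalIntegrable v volume a b)
    (h : ∀ x ∈ Icc a b, c ≤ v x) : c * (b - a) ≤ ∫ x in a..b, v x := by
  simpa [mul_comm] using integral_mono_on hab intervalIntegrable_const hv h

theorem integral_le_const_mul_sub (hab : a ≤ b) (hv : IntervalIntegrable v volume a b)
    (h : ∀ x ∈ Icc a b, v x ≤ c) : ∫ x in a..b, v x ≤ c * (b - a) := by
  simpa [mul_comm] using integral_mono_on hab hv intervalIntegrable_const h

theorem max_le_integral_of_mem_Icc {lo hi t : ℝ} (hv : IntervalIntegrable v volume a b)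
    (hbounds : ∀ x ∈ Icc a b, v x ∈ Icc lo hi) (ht : t ∈ Icc a b) :
    max (lo * (t - a)) ((∫ x in a..b, v x) - hi * (b - t)) ≤ ∫ x in a..t, v x := by
  obtain ⟨hat, htb⟩ := ht
  have hv_at : IntervalIntegrable v volume a t := hv.mono_set (uIcc_subset_uIcc_left
    (by rw [uIcc_of_le (hat.trans htb)]; exact ⟨hat, htb⟩))
  have hv_tb : IntervalIntegrable v volume t b := hv.mono_set (uIcc_subset_uIcc_right
    (by rw [uIcc_of_le (hat.trans htb)]; exact ⟨hat, htb⟩))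
  have hsplit := integral_add_adjacent_intervals hv_at hv_tb
  have hrest : ∫ x in t..b, v x ≤ hi * (b - t) :=
    integral_le_const_mul_sub htb hv_tb fun x hx => (hbounds x ⟨hat.trans hx.1, hx.2⟩).2
  refine max_le ?_ (by linarith)
  exact const_mul_sub_le_integral hat hv_at fun x hx => (hbounds x ⟨hx.1, hx.2.trans htb⟩).1

end intervalIntegral

theorem bangBang_eq_max {T Vlo Vhi Qinit Qfinal t₁ : ℝ} (hV : Vlo < Vhi)
    (ht₁ : t₁ = ((Qfinal - Qinit) - Vhi * T) / (Vlo - Vhi)) (t : ℝ) :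
    (if t ≤ t₁ then Qinit + Vlo * t else Qinit + Vlo * t₁ + Vhi * (t - t₁)) =
      max (Qinit + Vlo * t) (Qfinal - Vhi * (T - t)) := by
  have hswitch : (Vlo - Vhi) * t₁ = (Qfinal - Qinit) - Vhi * T := by
    rw [ht₁, mul_div_cancel₀ _ (sub_ne_zero.mpr hV.ne)]
  split_ifs with ht
  · refine (max_eq_left ?_).symm
    nlinarith
  · refine Eq.trans ?_ (max_eq_right ?_).symm <;> nlinarith

open intervalIntegral in
theorem stmt_11_general (T Vlo Vhi Qinit Qfinal : ℝ) (hT : 0 < T)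
    (hV : Vlo < Vhi)
    (t₁ : ℝ) (ht₁ : t₁ = ((Qfinal - Qinit) - Vhi * T) / (Vlo - Vhi))
    (χstar : ℝ → ℝ)
    (hχstar : ∀ t, χstar t =
      if t ≤ t₁ then Qinit + Vlo * t else Qinit + Vlo * t₁ + Vhi * (t - t₁))
    (f : ℝ → ℝ) (hf : Continuous f) (hanti : Antitone f)
    (v : ℝ → ℝ) (hint : IntervalIntegrable v volume 0 T)
    (hv : ∀ t ∈ Set.Icc (0 : ℝ) T, v t ∈ Set.Icc Vlo Vhi)
    (htot : (∫ τ in (0:ℝ)..T, v τ) = Qfinal - Qinit)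
    (χ : ℝ → ℝ) (hχ : ∀ t, χ t = Qinit + ∫ τ in (0:ℝ)..t, v τ) :
    (∫ t in (0:ℝ)..T, f (χ t)) ≤ ∫ t in (0:ℝ)..T, f (χstar t) := by
  have hχstar_max : χstar = fun t => max (Qinit + Vlo * t) (Qfinal - Vhi * (T - t)) :=
    funext fun t => (hχstar t).trans (bangBang_eq_max hV ht₁ t)
  have hχstar_le : ∀ t ∈ Icc 0 T, χstar t ≤ χ t := fun t ht => by
    obtain ⟨hslow, hfast⟩ := max_le_iff.mp (max_le_integral_of_mem_Icc hint hv ht)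
    rw [hχstar_max, hχ]
    exact max_le (by linarith) (by linarith)
  have hχ_cont : ContinuousOn χ (uIcc 0 T) := by
    rw [funext hχ]
    exact continuousOn_const.add (continuousOn_primitive_interval' hint left_mem_uIcc)
  have hχstar_cont : Continuous χstar := by rw [hχstar_max]; fun_prop
  exact integral_mono_on hT.le (hf.comp_continuousOn hχ_cont).intervalIntegrable
    (hf.comp hχstar_cont).continuousOn.intervalIntegrable fun t ht => hanti (hχstar_le t ht)

/-- For any continuous non-increasing rate function `f` of the distance,
the bang-bang speed profile maximizes the transferred data
`∫₀ᵀ f(χ(t)) dt` among all feasible trajectories `χ`. -/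
theorem stmt_11 (T Vlo Vhi Qinit Qfinal : ℝ) (hT : 0 < T) (hVlo : 0 < Vlo)
    (hV : Vlo < Vhi) (hQ : Qinit < Qfinal)
    (hfeas1 : Vlo * T ≤ Qfinal - Qinit) (hfeas2 : Qfinal - Qinit ≤ Vhi * T)
    (t₁ : ℝ) (ht₁ : t₁ = ((Qfinal - Qinit) - Vhi * T) / (Vlo - Vhi))
    (χstar : ℝ → ℝ)
    (hχstar : ∀ t, χstar t =
      if t ≤ t₁ then Qinit + Vlo * t else Qinit + Vlo * t₁ + Vhi * (t - t₁))
    (f : ℝ → ℝ) (hf : Continuous f) (hanti : Antitone f)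
    (v : ℝ → ℝ) (hint : IntervalIntegrable v volume 0 T)
    (hv : ∀ t ∈ Set.Icc (0 : ℝ) T, v t ∈ Set.Icc Vlo Vhi)
    (htot : (∫ τ in (0:ℝ)..T, v τ) = Qfinal - Qinit)
    (χ : ℝ → ℝ) (hχ : ∀ t, χ t = Qinit + ∫ τ in (0:ℝ)..t, v τ) :
    (∫ t in (0:ℝ)..T, f (χ t)) ≤ ∫ t in (0:ℝ)..T, f (χstar t) :=
  stmt_11_general T Vlo Vhi Qinit Qfinal hT hV t₁ ht₁ χstar hχstar f hf hanti v hint hv htot χ hχ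
end

section
/- Fix B > 0, σ² > 0, channel gains a₁ > 0, a₂ > 0, and rates r₁ > 0, r₂ > 0, and let S = {(p₁, p₂) ∈ ℝ² : p₁ ≥ 0, p₂ ≥ 0, σ²·(2^{r₁/B} − 1) ≤ a₁·p₁, σ²·(2^{r₂/B} − 1) ≤ a₂·p₂, σ²·(2^{(r₁+r₂)/B} − 1) ≤ a₁·p₁ + a₂·p₂}. If (p₁, p₂) ∈ S minimizes p₁ + p₂ over S, then the sum-rate constraint holds with equality: a₁·p₁ + a₂·p₂ = σ²·(2^{(r₁+r₂)/B} − 1). -/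
/-!
If the sum-rate constraint were slack at a minimizer, one of the two individual-rate constraints
would be slack too, because the thresholds are superadditive:
`(2^u - 1) + (2^v - 1) ≤ 2^(u+v) - 1` for `u, v ≥ 0`. Lowering that user's power a little keeps
the point feasible and strictly decreases the sum power.
-/

/-- The feasible set `S`, with the three rate thresholds abstracted to `c₁ c₂ c₃`. -/
def macPowerRegion (a₁ a₂ c₁ c₂ c₃ : ℝ) : Set (ℝ × ℝ) :=
  {q | 0 ≤ q.1 ∧ 0 ≤ q.2 ∧ c₁ ≤ a₁ * q.1 ∧ c₂ ≤ a₂ * q.2 ∧ c₃ ≤ a₁ * q.1 + a₂ * q.2}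

namespace macPowerRegion

variable {a₁ a₂ c₁ c₂ c₃ : ℝ} {p : ℝ × ℝ}

theorem swap_mem_iff :
    p.swap ∈ macPowerRegion a₂ a₁ c₂ c₁ c₃ ↔ p ∈ macPowerRegion a₁ a₂ c₁ c₂ c₃ := by
  simp only [macPowerRegion, Set.mem_ofPred_eq, Prod.fst_swap, Prod.snd_swap, add_comm (a₂ * _)]
  tauto

theorem exists_sum_lt_of_slack_fst (hc₁ : 0 ≤ c₁) (ha₁ : 0 < a₁)
    (hp : p ∈ macPowerRegion a₁ a₂ c₁ c₂ c₃) (h₁ : c₁ < a₁ * p.1) (h₃ : c₃ < a₁ * p.1 + a₂ * p.2) :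
    ∃ q ∈ macPowerRegion a₁ a₂ c₁ c₂ c₃, q.1 + q.2 < p.1 + p.2 := by
  obtain ⟨-, hp₂, -, hp₂c, -⟩ := hp
  set δ := min (a₁ * p.1 - c₁) (a₁ * p.1 + a₂ * p.2 - c₃)
  have hδ : 0 < δ := lt_min (by linarith) (by linarith)
  have hδ₁ : δ ≤ a₁ * p.1 - c₁ := min_le_left _ _
  have hδ₃ : δ ≤ a₁ * p.1 + a₂ * p.2 - c₃ := min_le_right _ _
  have hq₁ : a₁ * (p.1 - δ / a₁) = a₁ * p.1 - δ := by field_simp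
  refine ⟨(p.1 - δ / a₁, p.2), ⟨?_, hp₂, ?_, hp₂c, ?_⟩, ?_⟩
  · exact nonneg_of_mul_nonneg_right (by linarith) ha₁
  · linarith
  · linarith
  · simpa using div_pos hδ ha₁

theorem exists_sum_lt_of_slack_snd (hc₂ : 0 ≤ c₂) (ha₂ : 0 < a₂)
    (hp : p ∈ macPowerRegion a₁ a₂ c₁ c₂ c₃) (h₂ : c₂ < a₂ * p.2) (h₃ : c₃ < a₁ * p.1 + a₂ * p.2) :
    ∃ q ∈ macPowerRegion a₁ a₂ c₁ c₂ c₃, q.1 + q.2 < p.1 + p.2 := by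
  obtain ⟨q, hq, hlt⟩ := exists_sum_lt_of_slack_fst hc₂ ha₂ (swap_mem_iff.mpr hp) h₂
    (by simpa [add_comm] using h₃)
  exact ⟨q.swap, swap_mem_iff.mp (by simpa using hq), by simpa [add_comm] using hlt⟩

theorem sum_constraint_eq_of_isMinOn (hc₁ : 0 ≤ c₁) (hc₂ : 0 ≤ c₂) (hc : c₁ + c₂ ≤ c₃)
    (ha₁ : 0 < a₁) (ha₂ : 0 < a₂) (hp : p ∈ macPowerRegion a₁ a₂ c₁ c₂ c₃)
    (hmin : IsMinOn (fun q : ℝ × ℝ ↦ q.1 + q.2) (macPowerRegion a₁ a₂ c₁ c₂ c₃) p) :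
    a₁ * p.1 + a₂ * p.2 = c₃ := by
  obtain ⟨-, -, hp₁c, hp₂c, hp₃c⟩ := id hp
  by_contra hne
  have h₃ : c₃ < a₁ * p.1 + a₂ * p.2 := lt_of_le_of_ne hp₃c (Ne.symm hne)
  have hslack : c₁ < a₁ * p.1 ∨ c₂ < a₂ * p.2 := by
    by_contra! htight
    linarith [htight.1, htight.2]
  obtain ⟨q, hq, hlt⟩ := hslack.elim
    (exists_sum_lt_of_slack_fst hc₁ ha₁ hp · h₃) (exists_sum_lt_of_slack_snd hc₂ ha₂ hp · h₃)
  exact (isMinOn_iff.mp hmin q hq).not_gt hlt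

end macPowerRegion

theorem Real.rpow_sub_one_add_rpow_sub_one_le {b u v : ℝ} (hb : 1 ≤ b) (hu : 0 ≤ u) (hv : 0 ≤ v) :
    (b ^ u - 1) + (b ^ v - 1) ≤ b ^ (u + v) - 1 := by
  have hbu : 1 ≤ b ^ u := Real.one_le_rpow hb hu
  have hbv : 1 ≤ b ^ v := Real.one_le_rpow hb hv
  rw [Real.rpow_add (by linarith)]
  nlinarith [mul_nonneg (sub_nonneg.mpr hbu) (sub_nonneg.mpr hbv)]

/-- In the two-user MAC power-minimization problem, any sum-power
minimizer over the feasible set `S` satisfies the sum-rate constraint with equality. -/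
theorem stmt_13 (B σ2 a₁ a₂ r₁ r₂ : ℝ) (hB : 0 < B) (hσ : 0 < σ2)
    (ha₁ : 0 < a₁) (ha₂ : 0 < a₂) (hr₁ : 0 < r₁) (hr₂ : 0 < r₂)
    (S : Set (ℝ × ℝ))
    (hS : S = {q : ℝ × ℝ | 0 ≤ q.1 ∧ 0 ≤ q.2 ∧
      σ2 * ((2:ℝ) ^ (r₁ / B) - 1) ≤ a₁ * q.1 ∧
      σ2 * ((2:ℝ) ^ (r₂ / B) - 1) ≤ a₂ * q.2 ∧
      σ2 * ((2:ℝ) ^ ((r₁ + r₂) / B) - 1) ≤ a₁ * q.1 + a₂ * q.2})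
    (p : ℝ × ℝ) (hp : p ∈ S) (hopt : ∀ q ∈ S, p.1 + p.2 ≤ q.1 + q.2) :
    a₁ * p.1 + a₂ * p.2 = σ2 * ((2:ℝ) ^ ((r₁ + r₂) / B) - 1) := by
  change S = macPowerRegion a₁ a₂ _ _ _ at hS
  subst hS
  have hu : 0 ≤ r₁ / B := div_nonneg hr₁.le hB.le
  have hv : 0 ≤ r₂ / B := div_nonneg hr₂.le hB.le
  have hthreshold (w : ℝ) (hw : 0 ≤ w) : 0 ≤ σ2 * ((2:ℝ) ^ w - 1) :=
    mul_nonneg hσ.le (sub_nonneg.mpr (Real.one_le_rpow one_le_two hw))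
  refine macPowerRegion.sum_constraint_eq_of_isMinOn (hthreshold _ hu) (hthreshold _ hv) ?_
    ha₁ ha₂ hp (isMinOn_iff.mpr hopt)
  rw [← mul_add, add_div]
  exact mul_le_mul_of_nonneg_left (Real.rpow_sub_one_add_rpow_sub_one_le one_le_two hu hv) hσ.le
end
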